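/- arXiv:2112.09304 — 2 statements merged into one kernel-verified Lean document; each statement's English description precedes it below -/
import Mathlib

section
/- Let x solve ẍ(t) + (α/t)ẋ(t) + ∇_x f̃(x(t),μ(t)) = 0 with α ≥ 3, argmin f ≠ ∅, and ∫_{t₀}^∞ t μ(t) dt < ∞. Then f(x(t)) − min f = O(1/t²) as t → ∞. -/
/-!
Lyapunov argument with the energy
`E t = t² (f̃(x t, μ t) + κ μ t - min f) + ½ ‖(α - 1) (x t - x⋆) + t ẋ t‖²`.
As `f̃` is only separately differentiable, `E` need not be differentiable. But `f̃(z, m) + κ m` is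
nondecreasing in `m` and `μ` is nonincreasing, so on `[t, ∞)` the energy lies below the one with
the parameter frozen at `μ t`, which touches it at `t` and is differentiable there. Along the ODE
and by convexity of `f̃(·, μ t)`, the frozen energy has derivative at most `2 (α - 1) κ t μ t` at
`t`, which is integrable; a Dini-derivative comparison then bounds `E`, and `E t` dominates
`t² (f (x t) - min f)`.
-/

open MeasureTheory Filter Asymptotics Set
open scoped NNReal Topology
open RealInnerProductSpace

theorem ConvexOn.apply_sub_le_of_hasFDerivAt {E : Type*} [NormedAddCommGroup E] [NormedSpace ℝ E]
    {φ : E → ℝ} (hφ : ConvexOn ℝ univ φ) {φ' : E →L[ℝ] ℝ} {a : E} (h : HasFDerivAt φ φ' a)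
    (b : E) : φ' (b - a) ≤ φ b - φ a := by
  have hline : ConvexOn ℝ univ (φ ∘ AffineMap.lineMap (k := ℝ) a b) := hφ.comp_affineMap _
  have hderiv : HasDerivAt (φ ∘ AffineMap.lineMap (k := ℝ) a b) (φ' (b - a)) 0 := by
    refine HasFDerivAt.comp_hasDerivAt (0 : ℝ) ?_ AffineMap.hasDerivAt_lineMap
    simpa using h
  simpa [slope_def_field] using
    hline.le_slope_of_hasDerivAt (mem_univ 0) (mem_univ 1) one_pos hderiv

theorem ConvexOn.inner_sub_le_of_hasGradientAt {H : Type*} [NormedAddCommGroup H]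
    [InnerProductSpace ℝ H] [CompleteSpace H] {φ : H → ℝ} (hφ : ConvexOn ℝ univ φ) {g a : H}
    (h : HasGradientAt φ g a) (b : H) : ⟪g, b - a⟫ ≤ φ b - φ a := by
  simpa using hφ.apply_sub_le_of_hasFDerivAt h.hasFDerivAt b

theorem LipschitzOnWith.monotoneOn_add_mul {φ : ℝ → ℝ} {K : ℝ≥0} {s : Set ℝ}
    (hφ : LipschitzOnWith K φ s) : MonotoneOn (fun m => φ m + K * m) s := by
  intro a ha b hb hab
  have h := hφ.dist_le_mul a ha b hb
  rw [Real.dist_eq, Real.dist_eq, abs_of_nonpos (sub_nonpos.2 hab)] at h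
  dsimp only
  linarith [le_abs_self (φ a - φ b)]

theorem continuousOn_apply_of_lipschitzOnWith {α β γ δ : Type*} [TopologicalSpace α]
    [PseudoEMetricSpace β] [PseudoEMetricSpace γ] [TopologicalSpace δ] {g : α → β → γ}
    {t : Set β} {K : ℝ≥0} (hcont : ∀ m ∈ t, Continuous fun z => g z m)
    (hlip : ∀ z, LipschitzOnWith K (g z) t) {u : δ → α} {v : δ → β} {s : Set δ}
    (hu : ContinuousOn u s) (hv : ContinuousOn v s) (hvt : MapsTo v s t) :
    ContinuousOn (fun τ => g (u τ) (v τ)) s := by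
  have : ContinuousOn (Function.uncurry g) (univ ×ˢ t) :=
    continuousOn_prod_of_continuousOn_lipschitzOnWith' _ K (fun z _ => hlip z)
      (fun m hm => (hcont m hm).continuousOn)
  exact this.comp (hu.prodMk hv) fun τ hτ => ⟨mem_univ _, hvt hτ⟩

theorem frequently_slope_lt_of_eventually_le {E Ê : ℝ → ℝ} {t d r : ℝ}
    (hle : ∀ᶠ z in 𝓝[>] t, E z ≤ Ê z) (heq : E t = Ê t) (hd : HasDerivWithinAt Ê d (Ioi t) t)
    (hr : d < r) : ∃ᶠ z in 𝓝[>] t, slope E t z < r := by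
  have hÊ : ∀ᶠ z in 𝓝[>] t, slope Ê t z < r :=
    ((hasDerivWithinAt_iff_tendsto_slope' self_notMem_Ioi).1 hd).eventually_lt_const hr
  refine Eventually.frequently ?_
  filter_upwards [hle, hÊ, self_mem_nhdsWithin] with z hz hzÊ (hzt : t < z)
  refine lt_of_le_of_lt ?_ hzÊ
  rw [slope_def_field, slope_def_field, heq]
  gcongr

theorem le_add_integral_of_frequently_slope_lt {E φ : ℝ → ℝ} {a b : ℝ}
    (hE : ContinuousOn E (Ici a)) (hφ : ContinuousOn φ (Ici a))
    (hslope : ∀ t, a ≤ t → ∀ r, φ t < r → ∃ᶠ z in 𝓝[>] t, slope E t z < r) (hab : a ≤ b) :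
    E b ≤ E a + ∫ s in a..b, φ s := by
  set ψ : ℝ → ℝ := fun s => φ (max a s)
  have hψ : Continuous ψ :=
    hφ.comp_continuous (continuous_const.max continuous_id) fun s => le_max_left a s
  have hψφ : ∀ s, a ≤ s → ψ s = φ s := fun s hs => by simp [ψ, max_eq_right hs]
  have hB : ∀ u, HasDerivAt (fun u => E a + ∫ s in a..u, ψ s) (ψ u) u := fun u =>
    ((hψ.integral_hasStrictDerivAt a u).hasDerivAt).const_add (E a)
  have key := image_le_of_liminf_slope_right_le_deriv_boundary (hE.mono Icc_subset_Ici_self)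
    (by simp) (fun u _ => (hB u).continuousAt.continuousWithinAt)
    (fun u _ => (hB u).hasDerivWithinAt)
    (fun u hu r hr => hslope u hu.1 r (by rwa [hψφ u hu.1] at hr)) (right_mem_Icc.2 hab)
  rwa [intervalIntegral.integral_congr fun s hs => hψφ s (by rw [uIcc_of_le hab] at hs; exact hs.1)]
    at key

theorem isBigO_one_div_sq_of_sq_mul_le {g : ℝ → ℝ} {K : ℝ}
    (h : ∀ᶠ t in atTop, 0 ≤ g t ∧ t ^ 2 * g t ≤ K) : g =O[atTop] fun t => 1 / t ^ 2 := by
  refine isBigO_iff.2 ⟨K, ?_⟩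
  filter_upwards [h, eventually_gt_atTop 0] with t ⟨hg, hgK⟩ ht
  rw [Real.norm_of_nonneg hg, Real.norm_of_nonneg (by positivity), ← div_eq_mul_one_div,
    le_div_iff₀ (by positivity)]
  linarith

theorem intervalIntegral_le_setIntegral_Ici {φ : ℝ → ℝ} {a b : ℝ}
    (hφ : IntegrableOn φ (Ici a)) (hnonneg : ∀ s, a ≤ s → 0 ≤ φ s) (hab : a ≤ b) :
    ∫ s in a..b, φ s ≤ ∫ s in Ici a, φ s := by
  rw [intervalIntegral.integral_of_le hab]
  exact setIntegral_mono_set hφ ((ae_restrict_iff' measurableSet_Ici).2 (ae_of_all _ hnonneg))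
    (Ioc_subset_Ioi_self.trans Ioi_subset_Ici_self).eventuallyLE

section DampedEnergy

variable {H : Type*} [NormedAddCommGroup H] [InnerProductSpace ℝ H]
  (α c : ℝ) (xs : H) (x x' : ℝ → H)

noncomputable def dampedEnergy (P : ℝ → ℝ) (t : ℝ) : ℝ :=
  t ^ 2 * (P t - c) + 1 / 2 * ‖(α - 1) • (x t - xs) + t • x' t‖ ^ 2

variable {α c xs x x'}

theorem dampedEnergy_le_dampedEnergy {P Q : ℝ → ℝ} {t : ℝ} (h : P t ≤ Q t) :
    dampedEnergy α c xs x x' P t ≤ dampedEnergy α c xs x x' Q t := by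
  unfold dampedEnergy
  gcongr

theorem sq_mul_sub_le_dampedEnergy {P : ℝ → ℝ} {t v : ℝ} (h : v ≤ P t) :
    t ^ 2 * (v - c) ≤ dampedEnergy α c xs x x' P t := by
  unfold dampedEnergy
  have : t ^ 2 * (v - c) ≤ t ^ 2 * (P t - c) := by gcongr
  have : 0 ≤ 1 / 2 * ‖(α - 1) • (x t - xs) + t • x' t‖ ^ 2 := by positivity
  linarith

theorem ContinuousOn.dampedEnergy {P : ℝ → ℝ} {s : Set ℝ} (hx : ContinuousOn x s)
    (hx' : ContinuousOn x' s) (hP : ContinuousOn P s) :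
    ContinuousOn (dampedEnergy α c xs x x' P) s := by
  unfold _root_.dampedEnergy
  fun_prop

theorem hasDerivAt_dampedEnergy {x'' : ℝ → H} {P : ℝ → ℝ} {g : H} {t : ℝ} (ht : t ≠ 0)
    (hx : HasDerivAt x (x' t) t) (hx' : HasDerivAt x' (x'' t) t)
    (hode : x'' t + (α / t) • x' t + g = 0) (hP : HasDerivAt P ⟪g, x' t⟫ t) :
    HasDerivAt (dampedEnergy α c xs x x' P)
      (2 * t * (P t - c) + (α - 1) * t * ⟪g, xs - x t⟫) t := by
  have hw : HasDerivAt (fun s => (α - 1) • (x s - xs) + s • x' s) (-(t • g)) t := by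
    have h : HasDerivAt (fun s => (α - 1) • (x s - xs) + s • x' s)
        ((α - 1) • x' t + (t • x'' t + (1 : ℝ) • x' t)) t :=
      ((hx.sub_const xs).const_smul (α - 1)).add ((hasDerivAt_id' t).smul hx')
    refine h.congr_deriv ?_
    rw [eq_neg_of_add_eq_zero_right hode, smul_neg, neg_neg, smul_add, smul_smul,
      mul_div_cancel₀ α ht]
    module
  refine (((hasDerivAt_pow 2 t).mul (hP.sub_const c)).add
    (hw.norm_sq.const_mul (1 / 2))).congr_deriv ?_
  simp only [inner_neg_right, inner_add_left, inner_sub_right,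
    real_inner_smul_right, real_inner_comm g]
  push_cast
  ring

theorem frequently_slope_dampedEnergy_lt [CompleteSpace H] {f : H → ℝ} {ftil : H → ℝ → ℝ}
    {G : H → ℝ → H} {κ : ℝ} {μ : ℝ → ℝ} {x'' : ℝ → H} {t r : ℝ}
    (hconv : ConvexOn ℝ univ fun z => ftil z (μ t))
    (hG : HasGradientAt (fun w => ftil w (μ t)) (G (x t) (μ t)) (x t))
    (hmono : ∀ z, MonotoneOn (fun m => ftil z m + κ * m) (Ioi 0))
    (happrox : ∀ z, |ftil z (μ t) - f z| ≤ κ * μ t) (hxs : ∀ y, f xs ≤ f y)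
    (hα : 3 ≤ α) (ht : 0 < t) (hμ : ∀ z, t ≤ z → 0 < μ z ∧ μ z ≤ μ t)
    (hx : HasDerivAt x (x' t) t) (hx' : HasDerivAt x' (x'' t) t)
    (hode : x'' t + (α / t) • x' t + G (x t) (μ t) = 0)
    (hr : (2 * α - 2) * κ * (t * μ t) < r) :
    ∃ᶠ z in 𝓝[>] t,
      slope (dampedEnergy α (f xs) xs x x' fun s => ftil (x s) (μ s) + κ * μ s) t z < r := by
  set m := μ t
  have hm : 0 < m := (hμ t le_rfl).1
  have hP : HasDerivAt (fun s => ftil (x s) m + κ * m) ⟪G (x t) m, x' t⟫ t := by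
    simpa using (hG.hasFDerivAt.comp_hasDerivAt t hx).add_const (κ * m)
  have hgrad := hconv.inner_sub_le_of_hasGradientAt hG xs
  have happrox_xs := (abs_le.1 (happrox xs)).2
  have happrox_xt := (abs_le.1 (happrox (x t))).1
  have hmin := hxs (x t)
  refine frequently_slope_lt_of_eventually_le
    (Ê := dampedEnergy α (f xs) xs x x' fun s => ftil (x s) m + κ * m) ?_ rfl
    (hasDerivAt_dampedEnergy ht.ne' hx hx' hode hP).hasDerivWithinAt (lt_of_le_of_lt ?_ hr)
  · filter_upwards [self_mem_nhdsWithin] with z (hz : t < z)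
    exact dampedEnergy_le_dampedEnergy (hmono (x z) (hμ z hz.le).1 hm (hμ z hz.le).2)
  · have hgrad' : (α - 1) * t * ⟪G (x t) m, xs - x t⟫ ≤ (α - 1) * t * (ftil xs m - ftil (x t) m) :=
      mul_le_mul_of_nonneg_left hgrad (by nlinarith)
    have hdamping : (3 - α) * t * (ftil (x t) m - f xs + κ * m) ≤ 0 :=
      mul_nonpos_of_nonpos_of_nonneg (by nlinarith) (by linarith)
    have happrox' : (α - 1) * t * (ftil xs m - f xs - κ * m) ≤ 0 :=
      mul_nonpos_of_nonneg_of_nonpos (by nlinarith) (by linarith)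
    linarith

end DampedEnergy

theorem stmt9_general {H : Type*} [NormedAddCommGroup H] [InnerProductSpace ℝ H] [CompleteSpace H]
    (f : H → ℝ)
    (ftil : H → ℝ → ℝ) (κ : ℝ) (hκ : 0 < κ)
    (hconv : ∀ m : ℝ, 0 < m → ConvexOn ℝ Set.univ (fun z => ftil z m))
    (dmu : H → ℝ → ℝ)
    (hdmu : ∀ (z : H) (m : ℝ), 0 < m → HasDerivAt (fun m' => ftil z m') (dmu z m) m)
    (hdmubd : ∀ (z : H) (m : ℝ), 0 < m → |dmu z m| ≤ κ)
    (happrox : ∀ (z : H) (m : ℝ), 0 < m → |ftil z m - f z| ≤ κ * m)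
    (G : H → ℝ → H)
    (hG : ∀ (z : H) (m : ℝ), 0 < m → HasGradientAt (fun w => ftil w m) (G z m) z)
    (t₀ α : ℝ) (ht₀ : 0 < t₀) (hα : 3 ≤ α)
    (μ μ' : ℝ → ℝ) (hμpos : ∀ t, t₀ ≤ t → 0 < μ t)
    (hμderiv : ∀ t, t₀ ≤ t → HasDerivAt μ (μ' t) t)
    (hμdec : ∀ t, t₀ ≤ t → μ' t ≤ 0)
    (x x' x'' : ℝ → H)
    (hx : ∀ t, t₀ ≤ t → HasDerivAt x (x' t) t)
    (hx' : ∀ t, t₀ ≤ t → HasDerivAt x' (x'' t) t)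
    (heq : ∀ t, t₀ ≤ t → x'' t + (α / t) • x' t + G (x t) (μ t) = 0)
    (hH1 : MeasureTheory.IntegrableOn (fun t => t * μ t) (Set.Ici t₀))
    (xs : H) (hxs : ∀ y, f xs ≤ f y) :
    (fun t => f (x t) - f xs) =O[Filter.atTop] (fun t => 1 / t ^ 2) := by
  have hμcont : ContinuousOn μ (Ici t₀) := fun t ht =>
    (hμderiv t ht).continuousAt.continuousWithinAt
  have hμanti : AntitoneOn μ (Ici t₀) :=
    antitoneOn_of_hasDerivWithinAt_nonpos (convex_Ici t₀) hμcont
      (fun t ht => (hμderiv t (interior_subset ht)).hasDerivWithinAt)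
      (fun t ht => hμdec t (interior_subset ht))
  have hlip : ∀ z, LipschitzOnWith (⟨κ, hκ.le⟩ : ℝ≥0) (ftil z) (Ioi 0) := fun z =>
    (convex_Ioi 0).lipschitzOnWith_of_nnnorm_hasDerivWithin_le
      (fun m hm => (hdmu z m hm).hasDerivWithinAt)
      (fun m hm => NNReal.coe_le_coe.1 (by rw [coe_nnnorm, Real.norm_eq_abs]; exact hdmubd z m hm))
  set E := dampedEnergy α (f xs) xs x x' fun s => ftil (x s) (μ s) + κ * μ s
  have hxc : ContinuousOn x (Ici t₀) := fun t ht => (hx t ht).continuousAt.continuousWithinAt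
  have hE : ContinuousOn E (Ici t₀) :=
    ContinuousOn.dampedEnergy hxc (fun t ht => (hx' t ht).continuousAt.continuousWithinAt) <|
      (continuousOn_apply_of_lipschitzOnWith (fun m hm => continuous_iff_continuousAt.2 fun z =>
        (hG z m hm).differentiableAt.continuousAt) hlip hxc hμcont hμpos).add
        (continuousOn_const.mul hμcont)
  have hslope : ∀ t, t₀ ≤ t → ∀ r, (2 * α - 2) * κ * (t * μ t) < r →
      ∃ᶠ z in 𝓝[>] t, slope E t z < r := fun t ht r hr =>
    frequently_slope_dampedEnergy_lt (hconv _ (hμpos t ht)) (hG _ _ (hμpos t ht))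
      (fun z => (hlip z).monotoneOn_add_mul) (fun z => happrox z _ (hμpos t ht)) hxs hα
      (ht₀.trans_le ht) (fun z hz => ⟨hμpos z (ht.trans hz), hμanti ht (ht.trans hz) hz⟩)
      (hx t ht) (hx' t ht) (heq t ht) hr
  have hbound : ∀ t, t₀ ≤ t → E t ≤ E t₀ + ∫ s in Ici t₀, (2 * α - 2) * κ * (s * μ s) :=
    fun t ht => (le_add_integral_of_frequently_slope_lt hE
      (continuousOn_const.mul (continuousOn_id.mul hμcont)) hslope ht).trans <| by
      gcongr
      refine intervalIntegral_le_setIntegral_Ici (hH1.const_mul _) (fun s hs => ?_) ht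
      exact mul_nonneg (by nlinarith) (mul_nonneg (ht₀.le.trans hs) (hμpos s hs).le)
  refine isBigO_one_div_sq_of_sq_mul_le ((eventually_ge_atTop t₀).mono fun t ht =>
    ⟨sub_nonneg.2 (hxs _), (sq_mul_sub_le_dampedEnergy ?_).trans (hbound t ht)⟩)
  linarith [(abs_le.1 (happrox (x t) _ (hμpos t ht))).1]

theorem stmt9 {H : Type*} [NormedAddCommGroup H] [InnerProductSpace ℝ H] [CompleteSpace H]
    (f : H → ℝ) (hf : ConvexOn ℝ Set.univ f)
    (ftil : H → ℝ → ℝ) (κ : ℝ) (hκ : 0 < κ)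
    (hconv : ∀ m : ℝ, 0 < m → ConvexOn ℝ Set.univ (fun z => ftil z m))
    (dmu : H → ℝ → ℝ)
    (hdmu : ∀ (z : H) (m : ℝ), 0 < m → HasDerivAt (fun m' => ftil z m') (dmu z m) m)
    (hdmubd : ∀ (z : H) (m : ℝ), 0 < m → |dmu z m| ≤ κ)
    (happrox : ∀ (z : H) (m : ℝ), 0 < m → |ftil z m - f z| ≤ κ * m)
    (G : H → ℝ → H)
    (hG : ∀ (z : H) (m : ℝ), 0 < m → HasGradientAt (fun w => ftil w m) (G z m) z)
    (t₀ α : ℝ) (ht₀ : 0 < t₀) (hα : 3 ≤ α)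
    (μ μ' : ℝ → ℝ) (hμpos : ∀ t, t₀ ≤ t → 0 < μ t)
    (hμderiv : ∀ t, t₀ ≤ t → HasDerivAt μ (μ' t) t)
    (hμdec : ∀ t, t₀ ≤ t → μ' t ≤ 0)
    (hμlim : Filter.Tendsto μ Filter.atTop (nhds 0))
    (x x' x'' : ℝ → H)
    (hx : ∀ t, t₀ ≤ t → HasDerivAt x (x' t) t)
    (hx' : ∀ t, t₀ ≤ t → HasDerivAt x' (x'' t) t)
    (heq : ∀ t, t₀ ≤ t → x'' t + (α / t) • x' t + G (x t) (μ t) = 0)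
    (hH1 : MeasureTheory.IntegrableOn (fun t => t * μ t) (Set.Ici t₀))
    (xs : H) (hxs : ∀ y, f xs ≤ f y) :
    (fun t => f (x t) - f xs) =O[Filter.atTop] (fun t => 1 / t ^ 2) :=
  stmt9_general f ftil κ hκ hconv dmu hdmu hdmubd happrox G hG t₀ α ht₀ hα μ μ' hμpos hμderiv hμdec
    x x' x'' hx hx' heq hH1 xs hxs
end

section
/- Under the same hypotheses with α > 3, the solution satisfies the improved rate f(x(t)) − min f = o(1/t²) as t → ∞. -/
/-!
Write `w(t) = f̃(x(t), μ(t)) - min f + κ μ(t) ≥ f(x(t)) - min f`. For `θ ∈ [2, α - 1]` the energy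
`E_θ(t) = t² w + ½‖θ (x - x*) + t ẋ‖² + θ (α - 1 - θ)/2 ‖x - x*‖² ≥ 0`, augmented by
`∫_{t₀}^t ((θ - 2) s w + (α - 1 - θ) s ‖ẋ‖²) ds - 2 θ κ ∫_{t₀}^t s μ(s) ds`, is nonincreasing.
Since `t ↦ f̃(x(t), μ(t))` need not be differentiable, this is shown with upper right Dini
derivatives, using that `f̃` is `κ`-Lipschitz in `μ` and `μ` decreases. Taking `θ = 2` and
`θ = α - 1` shows (as `α > 3`) that `s w(s)` and `s ‖ẋ(s)‖²` are integrable and that `E_θ(t)`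
converges; as `E_θ` is affine in `θ`, also `E_0(t) = t² w + t² ‖ẋ‖² / 2` converges, and its
limit is `0` because `E_0(s) / s` is integrable on `(t₀, ∞)` while `1 / s` is not.
-/

open MeasureTheory Filter Asymptotics Set Topology
open scoped RealInnerProductSpace

def UpperRightDiniLE (φ : ℝ → ℝ) (t d : ℝ) : Prop :=
  ∀ r, d < r → ∀ᶠ z in 𝓝[>] t, slope φ t z < r

namespace UpperRightDiniLE

variable {φ ψ g : ℝ → ℝ} {t a b d g' : ℝ}

theorem of_hasDerivWithinAt (h : HasDerivWithinAt φ d (Ici t) t) : UpperRightDiniLE φ t d :=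
  fun _ hr =>
    ((hasDerivWithinAt_iff_tendsto_slope' (lt_irrefl t)).1 h.Ioi_of_Ici).eventually_lt_const hr

theorem mono (h : UpperRightDiniLE φ t a) (hab : a ≤ b) : UpperRightDiniLE φ t b :=
  fun r hr => h r (hab.trans_lt hr)

theorem of_sub_le (h : UpperRightDiniLE ψ t d)
    (hle : ∀ᶠ z in 𝓝[>] t, φ z - φ t ≤ ψ z - ψ t) : UpperRightDiniLE φ t d := by
  intro r hr
  filter_upwards [h r hr, hle, self_mem_nhdsWithin] with z hψ hφψ (hz : t < z)
  rw [slope_def_field] at hψ ⊢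
  exact (div_le_div_of_nonneg_right hφψ (sub_pos.2 hz).le).trans_lt hψ

theorem add (hφ : UpperRightDiniLE φ t a) (hψ : UpperRightDiniLE ψ t b) :
    UpperRightDiniLE (fun s => φ s + ψ s) t (a + b) := by
  intro r hr
  filter_upwards [hφ (a + (r - a - b) / 2) (by linarith), hψ (b + (r - a - b) / 2) (by linarith),
    self_mem_nhdsWithin] with z hφz hψz (hz : t < z)
  have hsum : slope (fun s => φ s + ψ s) t z = slope φ t z + slope ψ t z := by
    simp only [slope_def_field]
    ring
  linarith

theorem mul_left (h : UpperRightDiniLE φ t d) (hg : HasDerivAt g g' t)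
    (hg0 : ∀ᶠ z in 𝓝[>] t, 0 ≤ g z) :
    UpperRightDiniLE (fun s => g s * φ s) t (g t * d + φ t * g') := by
  intro r hr
  have hnear : ∀ᶠ r' in 𝓝[>] d, g t * r' + φ t * g' < r :=
    ((((continuous_const.mul continuous_id).add continuous_const).tendsto d).mono_left
      nhdsWithin_le_nhds).eventually_lt_const hr
  obtain ⟨r', hr'r, hdr' : d < r'⟩ := (hnear.and self_mem_nhdsWithin).exists
  have hlim : Tendsto (fun z => g z * r' + φ t * slope g t z) (𝓝[>] t)
      (𝓝 (g t * r' + φ t * g')) :=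
    ((hg.continuousAt.tendsto.mono_left nhdsWithin_le_nhds).mul_const r').add
      (((hasDerivAt_iff_tendsto_slope.1 hg).mono_left
        (nhdsWithin_mono t fun z (hz : t < z) => hz.ne')).const_mul (φ t))
  filter_upwards [h r' hdr', hg0, hlim.eventually_lt_const hr'r, self_mem_nhdsWithin]
    with z hφz hgz hz' (hz : t < z)
  have hprod : slope (fun s => g s * φ s) t z = g z * slope φ t z + φ t * slope g t z := by
    simp only [slope_def_field]
    field_simp [(sub_pos.2 hz).ne']
    ring
  rw [hprod]
  nlinarith [mul_le_mul_of_nonneg_left hφz.le hgz]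

end UpperRightDiniLE

theorem antitoneOn_Ici_of_upperRightDiniLE_zero {φ : ℝ → ℝ} {a : ℝ}
    (hc : ContinuousOn φ (Ici a)) (h : ∀ t ∈ Ici a, UpperRightDiniLE φ t 0) :
    AntitoneOn φ (Ici a) := fun s hs _ _ hst =>
  image_le_of_liminf_slope_right_le_deriv_boundary (B := fun _ => φ s) (B' := 0)
    (hc.mono (Icc_subset_Ici_iff hst |>.2 hs)) le_rfl continuousOn_const
    (fun _ _ => hasDerivWithinAt_const _ _ (φ s))
    (fun z hz r hr => (h z (le_trans hs hz.1) r hr).frequently) (right_mem_Icc.2 hst)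

theorem exists_tendsto_of_antitoneOn_Ici {φ : ℝ → ℝ} {a m : ℝ} (h : AntitoneOn φ (Ici a))
    (hm : ∀ t ∈ Ici a, m ≤ φ t) : ∃ L, Tendsto φ atTop (𝓝 L) := by
  have hanti : Antitone fun t => φ (max t a) := fun s t hst =>
    h (le_max_right s a) (le_max_right t a) (max_le_max hst le_rfl)
  refine ⟨_, (tendsto_atTop_ciInf hanti ⟨m, ?_⟩).congr' ?_⟩
  · rintro _ ⟨t, rfl⟩
    exact hm _ (le_max_right t a)
  · filter_upwards [eventually_ge_atTop a] with t ht
    rw [max_eq_left ht]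

theorem ContinuousOn.continuousOn_primitive_Ici {k : ℝ → ℝ} {a : ℝ} (hk : ContinuousOn k (Ici a)) :
    ContinuousOn (fun t => ∫ s in a..t, k s) (Ici a) := by
  intro t (ht : a ≤ t)
  have hat : a ≤ t + 1 := by linarith
  have hIcc := intervalIntegral.continuousOn_primitive_interval (μ := volume)
    ((hk.mono Icc_subset_Ici_self).integrableOn_Icc.mono_set (uIcc_of_le hat).subset)
  rw [uIcc_of_le hat] at hIcc
  exact (hIcc t ⟨ht, by linarith⟩).mono_of_mem_nhdsWithin <|
    mem_of_superset (inter_mem_nhdsWithin _ (Iic_mem_nhds (lt_add_one t))) fun _ hz => hz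

theorem ContinuousOn.hasDerivWithinAt_primitive_Ici {k : ℝ → ℝ} {a t : ℝ}
    (hk : ContinuousOn k (Ici a)) (ht : a ≤ t) :
    HasDerivWithinAt (fun u => ∫ s in a..u, k s) (k t) (Ici t) t :=
  have hkt : ContinuousOn k (Ici t) := hk.mono (Ici_subset_Ici.2 ht)
  intervalIntegral.integral_hasDerivWithinAt_right
    (hk.mono (uIcc_of_le ht ▸ Icc_subset_Ici_self)).intervalIntegrable
    ((hkt.mono Ioi_subset_Ici_self).stronglyMeasurableAtFilter_nhdsWithin measurableSet_Ioi t)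
    ((hkt t self_mem_Ici).mono Ioi_subset_Ici_self)

theorem ContinuousOn.integrableOn_Ioi_of_intervalIntegral_le {k : ℝ → ℝ} {a C : ℝ}
    (hk : ContinuousOn k (Ici a)) (hk0 : ∀ s ∈ Ici a, 0 ≤ k s)
    (hC : ∀ t ∈ Ici a, ∫ s in a..t, k s ≤ C) : IntegrableOn k (Ioi a) := by
  refine integrableOn_Ioi_of_intervalIntegral_norm_bounded C a (b := id) (l := atTop)
    (fun t => (hk.mono Icc_subset_Ici_self).integrableOn_Icc.mono_set Ioc_subset_Icc_self)
    tendsto_id ?_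
  filter_upwards [eventually_ge_atTop a] with t ht
  refine le_of_eq_of_le (intervalIntegral.integral_congr fun s hs => ?_) (hC t ht)
  rw [id, uIcc_of_le ht] at hs
  exact Real.norm_of_nonneg (hk0 s hs.1)

theorem eq_zero_of_tendsto_of_integrableOn_div {q : ℝ → ℝ} {a L : ℝ}
    (hq : Tendsto q atTop (𝓝 L)) (hint : IntegrableOn (fun s => q s / s) (Ioi a)) : L = 0 := by
  by_contra hL
  obtain ⟨T, hT⟩ := eventually_atTop.1
    ((hq.abs.eventually_const_le (half_lt_self (abs_pos.2 hL))).and (eventually_gt_atTop 0))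
  set b := max a T
  refine not_integrableOn_Ioi_inv (a := b) <|
    ((hint.mono_set (Ioi_subset_Ioi (le_max_left a T))).norm.const_mul (2 / |L|)).mono'
      ((continuousOn_inv₀.mono fun s (hs : b < s) => ?_).aestronglyMeasurable measurableSet_Ioi)
      (ae_restrict_of_forall_mem measurableSet_Ioi fun s (hs : b < s) => ?_)
  · exact (hT s (le_max_right a T |>.trans hs.le)).2.ne'
  obtain ⟨hqs, hs0⟩ := hT s (le_max_right a T |>.trans hs.le)
  rw [norm_inv, norm_div, Real.norm_of_nonneg hs0.le, Real.norm_eq_abs]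
  field_simp
  linarith

theorem intervalIntegral_le_integral_Ioi {f : ℝ → ℝ} {a t : ℝ} (hf : IntegrableOn f (Ioi a))
    (hf0 : ∀ s ∈ Ioi a, 0 ≤ f s) (ht : a ≤ t) : ∫ s in a..t, f s ≤ ∫ s in Ioi a, f s := by
  rw [intervalIntegral.integral_of_le ht]
  exact setIntegral_mono_set hf (ae_restrict_of_forall_mem measurableSet_Ioi hf0)
    Ioc_subset_Ioi_self.eventuallyLE

theorem isLittleO_one_div_sq_of_abs_le {u v : ℝ → ℝ}
    (hv : Tendsto (fun t => t ^ 2 * v t) atTop (𝓝 0)) (huv : ∀ᶠ t in atTop, |u t| ≤ v t) :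
    u =o[atTop] fun t => 1 / t ^ 2 := by
  have hvo : v =o[atTop] fun t => 1 / t ^ 2 := by
    refine (isLittleO_iff_tendsto' ?_).2 (hv.congr' ?_)
    all_goals filter_upwards [eventually_gt_atTop 0] with t ht
    · exact fun h => absurd h (by positivity)
    · field_simp
  refine (IsBigO.of_bound 1 (huv.mono fun t ht => ?_)).trans_isLittleO hvo
  rwa [one_mul, Real.norm_eq_abs, Real.norm_eq_abs, abs_of_nonneg ((abs_nonneg _).trans ht)]

theorem ConvexOn.add_inner_sub_le_of_hasGradientAt {H : Type*} [NormedAddCommGroup H]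
    [InnerProductSpace ℝ H] [CompleteSpace H] {F : H → ℝ} (hF : ConvexOn ℝ univ F) {p g : H}
    (hg : HasGradientAt F g p) (y : H) : F p + ⟪g, y - p⟫ ≤ F y := by
  let ℓ : ℝ →ᵃ[ℝ] H := AffineMap.lineMap p y
  have hline : ConvexOn ℝ univ (F ∘ ℓ) := hF.comp_affineMap ℓ
  have hderiv : HasDerivAt (F ∘ ℓ) ⟪g, y - p⟫ 0 := by
    simpa [InnerProductSpace.toDual_apply_apply] using
      hg.hasFDerivAt.comp_hasDerivAt_of_eq 0 AffineMap.hasDerivAt_lineMap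
        (AffineMap.lineMap_apply_zero p y).symm
  have := hline.le_slope_of_hasDerivAt (mem_univ 0) (mem_univ 1) zero_lt_one hderiv
  simp only [slope_def_field, Function.comp_apply, AffineMap.lineMap_apply_one,
    AffineMap.lineMap_apply_zero, sub_zero, div_one, ℓ] at this
  linarith

section Lyapunov

variable {H : Type*} [NormedAddCommGroup H]

noncomputable def inertialDissipation (x' : ℝ → H) (w : ℝ → ℝ) (α θ s : ℝ) : ℝ :=
  (θ - 2) * (s * w s) + (α - 1 - θ) * (s * ‖x' s‖ ^ 2)

theorem inertialDissipation_nonneg {x' : ℝ → H} {w : ℝ → ℝ} {α θ s : ℝ} (hs : 0 ≤ s)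
    (hw : 0 ≤ w s) (hθ : 2 ≤ θ) (hθα : θ ≤ α - 1) : 0 ≤ inertialDissipation x' w α θ s := by
  have : 0 ≤ α - 1 - θ := by linarith
  have : 0 ≤ θ - 2 := by linarith
  unfold inertialDissipation
  positivity

variable [InnerProductSpace ℝ H]

/-- Abstract form of the smoothed dynamics: `g t` stands for `∇f̃(x t, μ t)`, `w t` for
`f̃(x t, μ t) - min f + κ μ t` and `ε t` for `2 κ μ t`. -/
structure IsPerturbedInertialTrajectory (x x' x'' g : ℝ → H) (w ε : ℝ → ℝ) (xs : H)
    (α t₀ : ℝ) : Prop where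
  hasDerivAt_pos : ∀ t ∈ Ici t₀, HasDerivAt x (x' t) t
  hasDerivAt_vel : ∀ t ∈ Ici t₀, HasDerivAt x' (x'' t) t
  ode : ∀ t ∈ Ici t₀, x'' t + (α / t) • x' t + g t = 0
  continuousOn_gap : ContinuousOn w (Ici t₀)
  continuousOn_err : ContinuousOn ε (Ici t₀)
  upperRightDiniLE_gap : ∀ t ∈ Ici t₀, UpperRightDiniLE w t ⟪x' t, g t⟫
  gap_sub_err_le : ∀ t ∈ Ici t₀, w t - ε t ≤ ⟪x t - xs, g t⟫

noncomputable def inertialEnergy (x x' : ℝ → H) (xs : H) (w : ℝ → ℝ) (α θ t : ℝ) : ℝ :=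
  t ^ 2 * w t + (‖θ • (x t - xs) + t • x' t‖ ^ 2 / 2 + θ * (α - 1 - θ) / 2 * ‖x t - xs‖ ^ 2)

noncomputable def inertialLyapunov (x x' : ℝ → H) (xs : H) (w ε : ℝ → ℝ) (α t₀ θ t : ℝ) : ℝ :=
  inertialEnergy x x' xs w α θ t +
    ((∫ s in t₀..t, inertialDissipation x' w α θ s) - θ * ∫ s in t₀..t, s * ε s)

variable {x x' x'' g : ℝ → H} {w ε : ℝ → ℝ} {xs : H} {α t₀ θ t : ℝ}

theorem inertialEnergy_eq :
    inertialEnergy x x' xs w α θ t = t ^ 2 * w t + t ^ 2 * ‖x' t‖ ^ 2 / 2 +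
      θ * ((α - 1) / 2 * ‖x t - xs‖ ^ 2 + t * ⟪x t - xs, x' t⟫) := by
  rw [inertialEnergy, norm_add_sq_real, norm_smul, norm_smul, real_inner_smul_left,
    real_inner_smul_right, Real.norm_eq_abs, Real.norm_eq_abs, mul_pow, mul_pow, sq_abs, sq_abs]
  ring

theorem inertialEnergy_nonneg (hw : 0 ≤ w t) (hθ : 0 ≤ θ) (hθα : θ ≤ α - 1) :
    0 ≤ inertialEnergy x x' xs w α θ t := by
  have : 0 ≤ θ * (α - 1 - θ) := mul_nonneg hθ (by linarith)
  unfold inertialEnergy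
  positivity

theorem hasDerivAt_inertialEnergy_sub_sq_mul (hx : HasDerivAt x (x' t) t)
    (hx' : HasDerivAt x' (x'' t) t) (hode : x'' t + (α / t) • x' t + g t = 0) (ht : t ≠ 0) :
    HasDerivAt (fun s => ‖θ • (x s - xs) + s • x' s‖ ^ 2 / 2 + θ * (α - 1 - θ) / 2 * ‖x s - xs‖ ^ 2)
      ((θ + 1 - α) * t * ‖x' t‖ ^ 2 - t ^ 2 * ⟪x' t, g t⟫ - θ * t * ⟪x t - xs, g t⟫) t := by
  have hacc : t • x'' t = -(α • x' t) - t • g t := by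
    have := congrArg (t • ·) hode
    simp only [smul_add, smul_smul, mul_div_cancel₀ α ht, smul_zero] at this
    rw [← sub_eq_zero, ← this]
    abel
  have hv : HasDerivAt (fun s => θ • (x s - xs) + s • x' s) ((θ + 1 - α) • x' t - t • g t) t :=
    (((hx.sub_const xs).const_smul θ).add ((hasDerivAt_id' t).smul hx')).congr_deriv <| by
      rw [hacc, one_smul]
      module
  refine ((hv.norm_sq.div_const 2).add
    ((hx.sub_const xs).norm_sq.const_mul (θ * (α - 1 - θ) / 2))).congr_deriv ?_
  simp only [inner_add_left, inner_sub_right, real_inner_smul_left, real_inner_smul_right,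
    real_inner_self_eq_norm_sq, real_inner_comm (x' t) (x t - xs)]
  ring

namespace IsPerturbedInertialTrajectory

theorem continuousOn_inertialDissipation
    (h : IsPerturbedInertialTrajectory x x' x'' g w ε xs α t₀) :
    ContinuousOn (inertialDissipation x' w α θ) (Ici t₀) := by
  have hx' : ContinuousOn x' (Ici t₀) := fun t ht =>
    (h.hasDerivAt_vel t ht).continuousAt.continuousWithinAt
  exact (continuousOn_const.mul (continuousOn_id.mul h.continuousOn_gap)).add
    (continuousOn_const.mul (continuousOn_id.mul (hx'.norm.pow 2)))

theorem antitoneOn_inertialLyapunov (h : IsPerturbedInertialTrajectory x x' x'' g w ε xs α t₀)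
    (ht₀ : 0 < t₀) (hθ : 0 ≤ θ) : AntitoneOn (inertialLyapunov x x' xs w ε α t₀ θ) (Ici t₀) := by
  have hsε : ContinuousOn (fun s => s * ε s) (Ici t₀) := continuousOn_id.mul h.continuousOn_err
  have hnorm := fun t (ht : t ∈ Ici t₀) => hasDerivAt_inertialEnergy_sub_sq_mul (θ := θ)
    (xs := xs) (h.hasDerivAt_pos t ht) (h.hasDerivAt_vel t ht) (h.ode t ht) (ht₀.trans_le ht).ne'
  refine antitoneOn_Ici_of_upperRightDiniLE_zero ?_ fun t ht => ?_
  · exact (((continuousOn_pow 2).mul h.continuousOn_gap).add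
      fun t ht => (hnorm t ht).continuousAt.continuousWithinAt).add
      (h.continuousOn_inertialDissipation.continuousOn_primitive_Ici.sub
        (continuousOn_const.mul hsε.continuousOn_primitive_Ici))
  have hgap := h.gap_sub_err_le t ht
  have ht0 : 0 ≤ t := ht₀.le.trans ht
  refine ((((h.upperRightDiniLE_gap t ht).mul_left (hasDerivAt_pow 2 t)
      (Eventually.of_forall fun z => sq_nonneg z)).add
    (UpperRightDiniLE.of_hasDerivWithinAt (hnorm t ht).hasDerivWithinAt)).add
    (UpperRightDiniLE.of_hasDerivWithinAt
      ((h.continuousOn_inertialDissipation.hasDerivWithinAt_primitive_Ici ht).sub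
        ((hsε.hasDerivWithinAt_primitive_Ici ht).const_mul θ)))).mono ?_
  have : 0 ≤ θ * t * (⟪x t - xs, g t⟫ - (w t - ε t)) :=
    mul_nonneg (mul_nonneg hθ ht0) (sub_nonneg.2 hgap)
  simp only [inertialDissipation]
  push_cast
  linarith

theorem integrableOn_inertialDissipation
    (h : IsPerturbedInertialTrajectory x x' x'' g w ε xs α t₀) (ht₀ : 0 < t₀)
    (hθ : 2 ≤ θ) (hθα : θ ≤ α - 1) (hw : ∀ t ∈ Ici t₀, 0 ≤ w t) (hε : ∀ t ∈ Ici t₀, 0 ≤ ε t)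
    (hεint : IntegrableOn (fun s => s * ε s) (Ioi t₀)) :
    IntegrableOn (inertialDissipation x' w α θ) (Ioi t₀) := by
  refine h.continuousOn_inertialDissipation.integrableOn_Ioi_of_intervalIntegral_le
    (C := inertialLyapunov x x' xs w ε α t₀ θ t₀ + θ * ∫ s in Ioi t₀, s * ε s)
    (fun s (hs : t₀ ≤ s) => ?_) fun t ht => ?_
  · exact inertialDissipation_nonneg (ht₀.le.trans hs) (hw s hs) hθ hθα
  have hΦ := h.antitoneOn_inertialLyapunov ht₀ (by linarith : (0 : ℝ) ≤ θ) self_mem_Ici ht ht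
  have hE := inertialEnergy_nonneg (x := x) (x' := x') (xs := xs) (hw t ht)
    (by linarith : (0 : ℝ) ≤ θ) hθα
  have hJ := mul_le_mul_of_nonneg_left (intervalIntegral_le_integral_Ioi hεint
    (fun s (hs : t₀ < s) => mul_nonneg (ht₀.trans hs).le (hε s hs.le)) ht)
    (by linarith : (0 : ℝ) ≤ θ)
  simp only [inertialLyapunov, intervalIntegral.integral_same, sub_zero, mul_zero,
    add_zero] at hΦ ⊢
  linarith

theorem exists_tendsto_inertialEnergy
    (h : IsPerturbedInertialTrajectory x x' x'' g w ε xs α t₀) (ht₀ : 0 < t₀)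
    (hθ : 2 ≤ θ) (hθα : θ ≤ α - 1) (hw : ∀ t ∈ Ici t₀, 0 ≤ w t) (hε : ∀ t ∈ Ici t₀, 0 ≤ ε t)
    (hεint : IntegrableOn (fun s => s * ε s) (Ioi t₀)) :
    ∃ L, Tendsto (inertialEnergy x x' xs w α θ) atTop (𝓝 L) := by
  have hθ0 : 0 ≤ θ := by linarith
  have hD := h.integrableOn_inertialDissipation ht₀ hθ hθα hw hε hεint
  obtain ⟨Φ, hΦ⟩ := exists_tendsto_of_antitoneOn_Ici (h.antitoneOn_inertialLyapunov ht₀ hθ0)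
    (m := -(θ * ∫ s in Ioi t₀, s * ε s)) fun t (ht : t₀ ≤ t) => by
      have hE := inertialEnergy_nonneg (x := x) (x' := x') (xs := xs) (hw t ht) hθ0 hθα
      have hDt : 0 ≤ ∫ s in t₀..t, inertialDissipation x' w α θ s :=
        intervalIntegral.integral_nonneg ht fun s hs =>
          inertialDissipation_nonneg (ht₀.le.trans hs.1) (hw s hs.1) hθ hθα
      have hJ := mul_le_mul_of_nonneg_left (intervalIntegral_le_integral_Ioi hεint
        (fun s (hs : t₀ < s) => mul_nonneg (ht₀.trans hs).le (hε s hs.le)) ht) hθ0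
      rw [inertialLyapunov]
      linarith
  refine ⟨_, (hΦ.sub ((intervalIntegral_tendsto_integral_Ioi t₀ hD tendsto_id).sub
    ((intervalIntegral_tendsto_integral_Ioi t₀ hεint tendsto_id).const_mul θ))).congr
    fun t => ?_⟩
  simp only [inertialLyapunov, id]
  ring

theorem tendsto_sq_mul_gap (h : IsPerturbedInertialTrajectory x x' x'' g w ε xs α t₀)
    (ht₀ : 0 < t₀) (hα : 3 < α) (hw : ∀ t ∈ Ici t₀, 0 ≤ w t) (hε : ∀ t ∈ Ici t₀, 0 ≤ ε t)
    (hεint : IntegrableOn (fun s => s * ε s) (Ioi t₀)) :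
    Tendsto (fun t => t ^ 2 * w t) atTop (𝓝 0) := by
  obtain ⟨L₂, hL₂⟩ := h.exists_tendsto_inertialEnergy ht₀ le_rfl (by linarith) hw hε hεint
  obtain ⟨Lα, hLα⟩ := h.exists_tendsto_inertialEnergy ht₀ (by linarith) le_rfl hw hε hεint
  have hq : Tendsto (inertialEnergy x x' xs w α 0) atTop
      (𝓝 (((α - 1) * L₂ - 2 * Lα) / (α - 3))) := by
    refine ((hL₂.const_mul (α - 1)).sub (hLα.const_mul 2)).div_const (α - 3) |>.congr fun t => ?_
    have : α - 3 ≠ 0 := by linarith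
    simp only [inertialEnergy_eq]
    field_simp
    ring
  have hq0 : ((α - 1) * L₂ - 2 * Lα) / (α - 3) = 0 := by
    refine eq_zero_of_tendsto_of_integrableOn_div hq (a := t₀) ?_
    have hI : IntegrableOn (fun s => (inertialDissipation x' w α (α - 1) s +
        inertialDissipation x' w α 2 s / 2) / (α - 3)) (Ioi t₀) :=
      ((h.integrableOn_inertialDissipation ht₀ (by linarith) le_rfl hw hε hεint).add
        ((h.integrableOn_inertialDissipation ht₀ le_rfl (by linarith) hw hε hεint).div_const
          2)).div_const (α - 3)
    refine hI.congr_fun (fun s (hs : t₀ < s) => ?_) measurableSet_Ioi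
    have : s ≠ 0 := (ht₀.trans hs).ne'
    have : α - 3 ≠ 0 := by linarith
    simp only [inertialEnergy_eq, inertialDissipation]
    field_simp
    ring
  rw [hq0] at hq
  refine tendsto_of_tendsto_of_tendsto_of_le_of_le' tendsto_const_nhds hq ?_ ?_
  all_goals filter_upwards [eventually_ge_atTop t₀] with t ht
  · exact mul_nonneg (sq_nonneg t) (hw t ht)
  · rw [inertialEnergy_eq, zero_mul, add_zero]
    exact le_add_of_nonneg_right (by positivity)

end IsPerturbedInertialTrajectory

end Lyapunov

theorem ContinuousOn.apply₂_of_lipschitz_snd {X Y : Type*} [TopologicalSpace X]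
    [TopologicalSpace Y] {F : Y → ℝ → ℝ} {κ : ℝ} (hF : ∀ m, 0 < m → Continuous fun y => F y m)
    (hLip : ∀ y m₁ m₂, 0 < m₁ → 0 < m₂ → |F y m₂ - F y m₁| ≤ κ * |m₂ - m₁|)
    {s : Set X} {u : X → Y} {m : X → ℝ} (hu : ContinuousOn u s) (hm : ContinuousOn m s)
    (hm0 : ∀ t ∈ s, 0 < m t) : ContinuousOn (fun t => F (u t) (m t)) s := by
  intro t ht
  have hfrozen : Tendsto (fun z => F (u z) (m t)) (𝓝[s] t) (𝓝 (F (u t) (m t))) :=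
    ((hF _ (hm0 t ht)).tendsto _).comp (hu t ht)
  have hshift : Tendsto (fun z => F (u z) (m z) - F (u z) (m t)) (𝓝[s] t) (𝓝 0) := by
    refine squeeze_zero_norm' ?_ (by simpa using ((hm t ht).sub_const (m t)).abs.const_mul κ)
    filter_upwards [self_mem_nhdsWithin] with z hz
    exact hLip _ _ _ (hm0 t ht) (hm0 z hz)
  have := hshift.add hfrozen
  simp only [sub_add_cancel, zero_add] at this
  exact this

theorem upperRightDiniLE_apply₂_add_of_lipschitz_snd {H : Type*} [NormedAddCommGroup H]
    [InnerProductSpace ℝ H] [CompleteSpace H] {F : H → ℝ → ℝ} {κ c t : ℝ} {u : ℝ → H}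
    {u' G : H} {m : ℝ → ℝ}
    (hLip : ∀ y m₁ m₂, 0 < m₁ → 0 < m₂ → |F y m₂ - F y m₁| ≤ κ * |m₂ - m₁|)
    (hG : HasGradientAt (fun y => F y (m t)) G (u t)) (hu : HasDerivAt u u' t)
    (hm : ∀ᶠ z in 𝓝[>] t, 0 < m z ∧ m z ≤ m t) (hmt : 0 < m t) :
    UpperRightDiniLE (fun s => F (u s) (m s) + κ * m s - c) t ⟪u', G⟫ := by
  have hfrozen : HasDerivAt (fun s => F (u s) (m t)) ⟪u', G⟫ t := by
    simpa [InnerProductSpace.toDual_apply_apply, real_inner_comm, Function.comp_def] using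
      hG.hasFDerivAt.comp_hasDerivAt t hu
  refine (UpperRightDiniLE.of_hasDerivWithinAt hfrozen.hasDerivWithinAt).of_sub_le ?_
  filter_upwards [hm] with z ⟨hz0, hzt⟩
  have := (abs_le.1 (hLip (u z) (m t) (m z) hmt hz0)).2
  rw [abs_of_nonpos (sub_nonpos.2 hzt)] at this
  linarith

theorem isPerturbedInertialTrajectory_of_smoothing {H : Type*} [NormedAddCommGroup H]
    [InnerProductSpace ℝ H] [CompleteSpace H] {f : H → ℝ} {ftil : H → ℝ → ℝ} {G : H → ℝ → H}
    {κ α t₀ : ℝ} {μ : ℝ → ℝ} {x x' x'' : ℝ → H} {xs : H}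
    (hconv : ∀ m, 0 < m → ConvexOn ℝ univ fun z => ftil z m)
    (hLip : ∀ z m₁ m₂, 0 < m₁ → 0 < m₂ → |ftil z m₂ - ftil z m₁| ≤ κ * |m₂ - m₁|)
    (happrox : ∀ m, 0 < m → ftil xs m ≤ f xs + κ * m)
    (hG : ∀ z m, 0 < m → HasGradientAt (fun w => ftil w m) (G z m) z)
    (hμpos : ∀ t, t₀ ≤ t → 0 < μ t) (hμc : ContinuousOn μ (Ici t₀))
    (hμanti : AntitoneOn μ (Ici t₀)) (hx : ∀ t, t₀ ≤ t → HasDerivAt x (x' t) t)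
    (hx' : ∀ t, t₀ ≤ t → HasDerivAt x' (x'' t) t)
    (heq : ∀ t, t₀ ≤ t → x'' t + (α / t) • x' t + G (x t) (μ t) = 0) :
    IsPerturbedInertialTrajectory x x' x'' (fun t => G (x t) (μ t))
      (fun t => ftil (x t) (μ t) + κ * μ t - f xs) (fun t => 2 * κ * μ t) xs α t₀ where
  hasDerivAt_pos := hx
  hasDerivAt_vel := hx'
  ode := heq
  continuousOn_gap :=
    ((ContinuousOn.apply₂_of_lipschitz_snd
      (fun m hm => continuous_iff_continuousAt.2 fun z => (hG z m hm).differentiableAt.continuousAt)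
      hLip (fun t ht => (hx t ht).continuousAt.continuousWithinAt) hμc hμpos).add
        (continuousOn_const.mul hμc)).sub continuousOn_const
  continuousOn_err := continuousOn_const.mul hμc
  upperRightDiniLE_gap t ht :=
    upperRightDiniLE_apply₂_add_of_lipschitz_snd hLip (hG _ _ (hμpos t ht)) (hx t ht)
      (eventually_nhdsWithin_of_forall fun z (hz : t < z) =>
        ⟨hμpos z (ht.trans hz.le), hμanti ht (mem_Ici.2 (ht.trans hz.le)) hz.le⟩)
      (hμpos t ht)
  gap_sub_err_le t ht := by
    have hgrad := (hconv _ (hμpos t ht)).add_inner_sub_le_of_hasGradientAt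
      (hG (x t) (μ t) (hμpos t ht)) xs
    rw [real_inner_comm, ← neg_sub, inner_neg_left] at hgrad
    linarith [happrox _ (hμpos t ht)]

theorem stmt11_general {H : Type*} [NormedAddCommGroup H] [InnerProductSpace ℝ H] [CompleteSpace H]
    (f : H → ℝ)
    (ftil : H → ℝ → ℝ) (κ : ℝ) (hκ : 0 < κ)
    (hconv : ∀ m : ℝ, 0 < m → ConvexOn ℝ Set.univ (fun z => ftil z m))
    (dmu : H → ℝ → ℝ)
    (hdmu : ∀ (z : H) (m : ℝ), 0 < m → HasDerivAt (fun m' => ftil z m') (dmu z m) m)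
    (hdmubd : ∀ (z : H) (m : ℝ), 0 < m → |dmu z m| ≤ κ)
    (happrox : ∀ (z : H) (m : ℝ), 0 < m → |ftil z m - f z| ≤ κ * m)
    (G : H → ℝ → H)
    (hG : ∀ (z : H) (m : ℝ), 0 < m → HasGradientAt (fun w => ftil w m) (G z m) z)
    (t₀ α : ℝ) (ht₀ : 0 < t₀) (hα : 3 < α)
    (μ μ' : ℝ → ℝ) (hμpos : ∀ t, t₀ ≤ t → 0 < μ t)
    (hμderiv : ∀ t, t₀ ≤ t → HasDerivAt μ (μ' t) t)
    (hμdec : ∀ t, t₀ ≤ t → μ' t ≤ 0)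
    (x x' x'' : ℝ → H)
    (hx : ∀ t, t₀ ≤ t → HasDerivAt x (x' t) t)
    (hx' : ∀ t, t₀ ≤ t → HasDerivAt x' (x'' t) t)
    (heq : ∀ t, t₀ ≤ t → x'' t + (α / t) • x' t + G (x t) (μ t) = 0)
    (hH1 : MeasureTheory.IntegrableOn (fun t => t * μ t) (Set.Ici t₀))
    (xs : H) (hxs : ∀ y, f xs ≤ f y) :
    (fun t => f (x t) - f xs) =o[Filter.atTop] (fun t => 1 / t ^ 2) := by
  have hLip : ∀ z m₁ m₂, 0 < m₁ → 0 < m₂ → |ftil z m₂ - ftil z m₁| ≤ κ * |m₂ - m₁| :=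
    fun z m₁ m₂ h₁ h₂ => by
      simpa only [Real.norm_eq_abs] using
        (convex_Ioi (0 : ℝ)).norm_image_sub_le_of_norm_hasDerivWithin_le
          (fun m hm => (hdmu z m hm).hasDerivWithinAt)
          (fun m hm => (Real.norm_eq_abs _).trans_le (hdmubd z m hm)) h₁ h₂
  have hμc : ContinuousOn μ (Ici t₀) := fun t ht =>
    (hμderiv t ht).continuousAt.continuousWithinAt
  have hμanti : AntitoneOn μ (Ici t₀) :=
    antitoneOn_of_hasDerivWithinAt_nonpos (convex_Ici t₀) hμc
      (fun t ht => (hμderiv t (interior_subset ht)).hasDerivWithinAt)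
      fun t ht => hμdec t (interior_subset ht)
  have hgap : ∀ t ∈ Ici t₀, f (x t) - f xs ≤ ftil (x t) (μ t) + κ * μ t - f xs := fun t ht => by
    linarith [(abs_le.1 (happrox (x t) (μ t) (hμpos t ht))).1]
  have htraj := isPerturbedInertialTrajectory_of_smoothing hconv hLip
    (fun m hm => by linarith [(abs_le.1 (happrox xs m hm)).2]) hG hμpos hμc hμanti hx hx' heq
  refine isLittleO_one_div_sq_of_abs_le (htraj.tendsto_sq_mul_gap ht₀ hα
    (fun t ht => (sub_nonneg.2 (hxs _)).trans (hgap t ht)) (fun t ht => ?_) ?_) ?_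
  · have := hμpos t ht
    positivity
  · exact IntegrableOn.congr_fun ((hH1.mono_set Ioi_subset_Ici_self).const_mul (2 * κ))
      (fun s _ => by ring) measurableSet_Ioi
  · filter_upwards [eventually_ge_atTop t₀] with t ht
    rw [abs_of_nonneg (sub_nonneg.2 (hxs _))]
    exact hgap t ht

theorem stmt11 {H : Type*} [NormedAddCommGroup H] [InnerProductSpace ℝ H] [CompleteSpace H]
    (f : H → ℝ) (hf : ConvexOn ℝ Set.univ f)
    (ftil : H → ℝ → ℝ) (κ : ℝ) (hκ : 0 < κ)
    (hconv : ∀ m : ℝ, 0 < m → ConvexOn ℝ Set.univ (fun z => ftil z m))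
    (dmu : H → ℝ → ℝ)
    (hdmu : ∀ (z : H) (m : ℝ), 0 < m → HasDerivAt (fun m' => ftil z m') (dmu z m) m)
    (hdmubd : ∀ (z : H) (m : ℝ), 0 < m → |dmu z m| ≤ κ)
    (happrox : ∀ (z : H) (m : ℝ), 0 < m → |ftil z m - f z| ≤ κ * m)
    (G : H → ℝ → H)
    (hG : ∀ (z : H) (m : ℝ), 0 < m → HasGradientAt (fun w => ftil w m) (G z m) z)
    (t₀ α : ℝ) (ht₀ : 0 < t₀) (hα : 3 < α)
    (μ μ' : ℝ → ℝ) (hμpos : ∀ t, t₀ ≤ t → 0 < μ t)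
    (hμderiv : ∀ t, t₀ ≤ t → HasDerivAt μ (μ' t) t)
    (hμdec : ∀ t, t₀ ≤ t → μ' t ≤ 0)
    (hμlim : Filter.Tendsto μ Filter.atTop (nhds 0))
    (x x' x'' : ℝ → H)
    (hx : ∀ t, t₀ ≤ t → HasDerivAt x (x' t) t)
    (hx' : ∀ t, t₀ ≤ t → HasDerivAt x' (x'' t) t)
    (heq : ∀ t, t₀ ≤ t → x'' t + (α / t) • x' t + G (x t) (μ t) = 0)
    (hH1 : MeasureTheory.IntegrableOn (fun t => t * μ t) (Set.Ici t₀))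
    (xs : H) (hxs : ∀ y, f xs ≤ f y) :
    (fun t => f (x t) - f xs) =o[Filter.atTop] (fun t => 1 / t ^ 2) :=
  stmt11_general f ftil κ hκ hconv dmu hdmu hdmubd happrox G hG t₀ α ht₀ hα μ μ' hμpos hμderiv hμdec
    x x' x'' hx hx' heq hH1 xs hxs
end
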